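/- arXiv:2404.05813 — 2 statements merged into one kernel-verified Lean document; each statement's English description precedes it below -/
import Mathlib

section
/- Let φ : ℝⁿ → [0, ∞) be a function with sup_{x ∈ ℝⁿ} (1 + |x|)^{n+1} φ(x) < ∞, let μ₀ > 0, and let (y_j)_{j=1}^∞ ⊂ ℝⁿ satisfy |y_j − y_k| ≥ 2μ₀ for all j ≠ k. Then for every 1 ≤ r ≤ ∞ there is a constant C = C(r, φ, μ₀, n) > 0 such that for every complex sequence b = (b_j)_{j=1}^∞: ‖ Σ_{j=1}^∞ b_j φ(· − y_j) ‖_{L^r(ℝⁿ)} ≤ C ‖b‖_{ℓ^r}. -/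
open MeasureTheory Metric Filter Complex SchwartzMap
open scoped FourierTransform ENNReal NNReal Real

noncomputable section

abbrev Rn (n : ℕ) := EuclideanSpace ℝ (Fin n)
abbrev SchwartzFn (n : ℕ) := SchwartzMap (Rn n) ℂ
abbrev TemperedDist (n : ℕ) := SchwartzFn n →L[ℂ] ℂ

/-- A Littlewood–Paley family on `ℝⁿ`. -/
structure IsLittlewoodPaley {n : ℕ} (φ : ℕ → SchwartzFn n) : Prop where
  supp_zero : ∀ ξ : Rn n, 2 ≤ ‖ξ‖ → 𝓕 ⇑(φ 0) ξ = 0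
  one_near_ball : ∃ ε > (0:ℝ), ∀ ξ : Rn n, ‖ξ‖ ≤ 1 + ε → 𝓕 ⇑(φ 0) ξ = 1
  spec : ∀ j : ℕ, 1 ≤ j → ∀ ξ : Rn n,
    𝓕 ⇑(φ j) ξ = 𝓕 ⇑(φ 0) ((2:ℝ) ^ (-(j:ℝ)) • ξ) - 𝓕 ⇑(φ 0) ((2:ℝ) ^ (1-(j:ℝ)) • ξ)

lemma hasTemperateGrowth_sub_left {n : ℕ} (x : Rn n) :
    Function.HasTemperateGrowth (fun y : Rn n => x - y) := by
  refine Function.HasTemperateGrowth.of_fderiv (k := 1) (C := ‖x‖ + 1) ?_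
    ((differentiable_const x).sub differentiable_id) ?_
  · have h : (fderiv ℝ fun y : Rn n => x - y) =
        fun _ : Rn n => -ContinuousLinearMap.id ℝ (Rn n) := by
      funext y
      have : HasFDerivAt (fun y : Rn n => x - y) (-ContinuousLinearMap.id ℝ (Rn n)) y := by
        simpa using (hasFDerivAt_id y).const_sub x
      exact this.fderiv
    rw [h]
    exact Function.HasTemperateGrowth.const _
  · intro y
    have h1 : ‖x - y‖ ≤ ‖x‖ + ‖y‖ := norm_sub_le x y
    have h2 : (0:ℝ) ≤ ‖y‖ := norm_nonneg _
    have h3 : (0:ℝ) ≤ ‖x‖ := norm_nonneg _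
    have : ((1:ℝ) + ‖y‖) ^ 1 = 1 + ‖y‖ := pow_one _
    nlinarith

/-- `y ↦ φ(x - y)` as a Schwartz function. -/
def translateReflect {n : ℕ} (φ : SchwartzFn n) (x : Rn n) : SchwartzFn n :=
  SchwartzMap.compCLM ℂ (hasTemperateGrowth_sub_left x)
    ⟨1, ‖x‖ + 1, fun y => by
      have h1 : ‖y‖ ≤ ‖x‖ + ‖x - y‖ := by
        have := norm_sub_le x (x - y); simpa using this
      have h2 : (0:ℝ) ≤ ‖x - y‖ := norm_nonneg _
      have h3 : (0:ℝ) ≤ ‖x‖ := norm_nonneg _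
      have hp : ((1:ℝ) + ‖x - y‖) ^ 1 = 1 + ‖x - y‖ := pow_one _
      nlinarith⟩ φ

/-- Convolution `φ * f` of a Schwartz function with a tempered distribution,
as the smooth function `x ↦ ⟨f, φ(x − ·)⟩`. -/
def distConv {n : ℕ} (φ : SchwartzFn n) (f : TemperedDist n) (x : Rn n) : ℂ :=
  f (translateReflect φ x)

/-- Convergence of the partial sums of a complex series. -/
def ConvergesTo (c : ℕ → ℂ) (L : ℂ) : Prop :=
  Tendsto (fun N => ∑ j ∈ Finset.range N, c j) atTop (nhds L)

/-- The pairing `⟨h, g⟩ = ∫ h g` of a function with a Schwartz function. -/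
def pairing {n : ℕ} (h : Rn n → ℂ) (g : SchwartzFn n) : ℂ :=
  ∫ x, h x * g x

/-- ℓ^q-type ENNReal norm of a sequence, `q = ∞` giving the supremum. -/
def lqNorm (q : ℝ≥0∞) (a : ℕ → ℝ≥0∞) : ℝ≥0∞ :=
  if q = ∞ then ⨆ j, a j else (∑' j, a j ^ q.toReal) ^ (1 / q.toReal)

/-- L^p-type ENNReal norm of an `ℝ≥0∞`-valued function. -/
def lpNormE {n : ℕ} (p : ℝ≥0∞) (G : Rn n → ℝ≥0∞) : ℝ≥0∞ :=
  if p = ∞ then essSup G volume else (∫⁻ x, G x ^ p.toReal) ^ (1 / p.toReal)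

/-- Besov quasi-norm `‖f‖_{B^s_{pq}(φ)}`. -/
def besovNorm {n : ℕ} (φ : ℕ → SchwartzFn n) (s : ℝ) (p q : ℝ≥0∞) (f : TemperedDist n) : ℝ≥0∞ :=
  lqNorm q (fun j => ENNReal.ofReal ((2:ℝ) ^ ((j:ℝ) * s)) * eLpNorm (distConv (φ j) f) p volume)

/-- Triebel–Lizorkin quasi-norm `‖f‖_{F^s_{pq}(φ)}`, including the `p = ∞` case. -/
def tlNorm {n : ℕ} (φ : ℕ → SchwartzFn n) (s : ℝ) (p q : ℝ≥0∞) (f : TemperedDist n) : ℝ≥0∞ :=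
  if p = ∞ then
    ⨆ (x : Rn n) (J : ℤ),
      ENNReal.ofReal ((2:ℝ) ^ ((J:ℝ) * n / q.toReal)) *
      (if q = ∞ then
        essSup (fun y => ⨆ j : ℕ, if J ≤ (j:ℤ) then
            ENNReal.ofReal ((2:ℝ) ^ ((j:ℝ) * s)) * ‖distConv (φ j) f y‖₊ else 0)
          (volume.restrict (ball x ((2:ℝ) ^ (-(J:ℝ)))))
      else
        (∫⁻ y in ball x ((2:ℝ) ^ (-(J:ℝ))),
          ∑' j : ℕ, (if J ≤ (j:ℤ) then
            ENNReal.ofReal ((2:ℝ) ^ ((j:ℝ) * s)) * ‖distConv (φ j) f y‖₊ else 0) ^ q.toReal)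
          ^ (1 / q.toReal))
  else
    lpNormE p (fun x =>
      lqNorm q (fun j => ENNReal.ofReal ((2:ℝ) ^ ((j:ℝ) * s)) * ‖distConv (φ j) f x‖₊))

/-- The statement that the series `T f = ∑_{j≥1} τ_{y_j}(φ_j * f)` converges to the tempered
distribution `Tf` in `𝒮'`, tested against every Schwartz function. -/
def IsTSum {n : ℕ} (φ : ℕ → SchwartzFn n) (y : ℕ → Rn n) (f : TemperedDist n)
    (Tf : TemperedDist n) : Prop :=
  ∀ g : SchwartzFn n,
    (∀ j : ℕ, 1 ≤ j → Integrable (fun x => distConv (φ j) f (x - y j) * g x) volume) ∧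
    ConvergesTo (fun j => pairing (fun x => distConv (φ (j+1)) f (x - y (j+1))) g) (Tf g)

/-- Convolution of two functions on `ℝⁿ`. -/
def fconv {n : ℕ} (g h : Rn n → ℂ) (x : Rn n) : ℂ := ∫ t, g t * h (x - t)

/-- The character `x ↦ exp(2πi c ⟨y₀, x⟩)`. -/
def expChar {n : ℕ} (y₀ : Rn n) (c : ℝ) (x : Rn n) : ℂ :=
  Complex.exp (2 * (Real.pi : ℂ) * Complex.I * ((c * (inner ℝ y₀ x : ℝ) : ℝ) : ℂ))

/-- The function `χ e_l`. -/
def chiE {n : ℕ} (χ : Rn n → ℝ) (y₀ : Rn n) (l : ℕ) (t : Rn n) : ℂ :=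
  (χ t : ℂ) * expChar y₀ ((2:ℝ) ^ (l : ℕ)) t

/-- Translation `τ_v g = g(· − v)`. -/
def transl {n : ℕ} (v : Rn n) (g : Rn n → ℂ) (t : Rn n) : ℂ := g (t - v)

/-- The multiplier `m(ξ) = ∑_{j≥1} e^{−2πi y_j·ξ} φ̂₁(2^{1−j} ξ)`. -/
def mFun {n : ℕ} (φ : ℕ → SchwartzFn n) (y : ℕ → Rn n) (ξ : Rn n) : ℂ :=
  ∑' j : ℕ,
    Complex.exp (-(2 * (Real.pi : ℂ) * Complex.I) * ((inner ℝ (y (j+1)) ξ : ℝ) : ℂ)) *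
      𝓕 ⇑(φ 1) ((2:ℝ) ^ ((1:ℝ) - ((j:ℝ) + 1)) • ξ)

/-- The `ℓ^r`-valued Besov quasi-norm of a sequence of tempered distributions. -/
def vecBesovNorm {n : ℕ} (φ : ℕ → SchwartzFn n) (s : ℝ) (p q r : ℝ≥0∞)
    (F : ℕ → TemperedDist n) : ℝ≥0∞ :=
  lqNorm q (fun j => ENNReal.ofReal ((2:ℝ) ^ ((j:ℝ) * s)) *
    lpNormE p (fun x => lqNorm r (fun m => (‖distConv (φ j) (F m) x‖₊ : ℝ≥0∞))))

/-- `T` applied to a Schwartz function, as a pointwise-defined function. -/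
def TfunS {n : ℕ} (φ : ℕ → SchwartzFn n) (y : ℕ → Rn n) (f : SchwartzFn n) (x : Rn n) : ℂ :=
  ∑' j : ℕ, fconv (⇑(φ (j+1))) (⇑f) (x - y (j+1))


/-- Auxiliary: the extended norm of a complex tsum is at most the tsum of extended norms. -/
lemma aux_enorm_tsum (f : ℕ → ℂ) :
    (‖∑' i, f i‖₊ : ℝ≥0∞) ≤ ∑' i, (‖f i‖₊ : ℝ≥0∞) := by
  by_cases h : Summable fun i => ‖f i‖₊
  · rw [← ENNReal.coe_tsum h]
    exact_mod_cast nnnorm_tsum_le h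
  · have : (∑' i, (‖f i‖₊ : ℝ≥0∞)) = ∞ := by
      by_contra hcon
      exact h (ENNReal.tsum_coe_ne_top_iff_summable.mp hcon)
    simp [this]

/-- For `ψ ≥ 0` with `(1+|x|)^(n+1) ψ(x)` bounded and `2μ₀`-separated points
`(y_j)`, one has `‖∑_j b_j ψ(·−y_j)‖_(L^r) ≤ C ‖b‖_(ℓ^r)` for every `1 ≤ r ≤ ∞`. -/
theorem statement9 {n : ℕ} (hn : 1 ≤ n)
    (ψ : Rn n → ℝ) (hψ0 : ∀ x : Rn n, 0 ≤ ψ x)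
    (hψd : ∃ A : ℝ, ∀ x : Rn n, (1 + ‖x‖) ^ (n + 1) * ψ x ≤ A)
    (μ₀ : ℝ) (hμ₀ : 0 < μ₀)
    (y : ℕ → Rn n) (hsep : ∀ j k : ℕ, j ≠ k → 2 * μ₀ ≤ ‖y j - y k‖)
    (r : ℝ≥0∞) (hr : 1 ≤ r) :
    ∃ C : ℝ≥0, 0 < C ∧ ∀ b : ℕ → ℂ,
      eLpNorm (fun x : Rn n => ∑' j : ℕ, b j * ((ψ (x - y j) : ℝ) : ℂ)) r volume ≤
        (C : ℝ≥0∞) * lqNorm r (fun j => (‖b j‖₊ : ℝ≥0∞)) := by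
  classical
  obtain ⟨A₀, hA₀⟩ := hψd
  set A : ℝ := max A₀ 1 with hAdef
  have hA0 : (0:ℝ) < A := lt_of_lt_of_le one_pos (le_max_right _ _)
  set g : Rn n → ℝ := fun z => ((1 + ‖z‖) ^ (n + 1))⁻¹ with hgdef
  have hbase : ∀ z : Rn n, (0:ℝ) < (1 + ‖z‖) ^ (n + 1) := fun z => by positivity
  have hgpos : ∀ z : Rn n, 0 < g z := fun z => inv_pos.2 (hbase z)
  have hψg : ∀ z : Rn n, ψ z ≤ A * g z := by
    intro z
    have h2 : (1 + ‖z‖) ^ (n + 1) * ψ z ≤ A := (hA₀ z).trans (le_max_left _ _)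
    have hb := hbase z
    calc ψ z = ((1 + ‖z‖) ^ (n + 1) * ψ z) * ((1 + ‖z‖) ^ (n + 1))⁻¹ := by
          field_simp
      _ ≤ A * ((1 + ‖z‖) ^ (n + 1))⁻¹ :=
          mul_le_mul_of_nonneg_right h2 (by positivity)
  have hgc : Continuous g := by
    apply Continuous.inv₀
    · fun_prop
    · exact fun z => (hbase z).ne'
  have hgm : Measurable fun z : Rn n => ENNReal.ofReal (g z) :=
    ENNReal.measurable_ofReal.comp hgc.measurable
  -- the integral of `g` is finite
  set I : ℝ≥0∞ := ∫⁻ z : Rn n, ENNReal.ofReal (g z) with hIdef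
  have hgrpow : ∀ z : Rn n, g z = (1 + ‖z‖) ^ (-(n + 1 : ℝ)) := by
    intro z
    rw [Real.rpow_neg (by positivity)]
    simp only [hgdef]
    norm_num
    rw [← Real.rpow_natCast (1 + ‖z‖) (n+1)]
    norm_num
  have hInt : Integrable (fun z : Rn n => (1 + ‖z‖) ^ (-(n + 1 : ℝ))) volume :=
    integrable_one_add_norm (by
      rw [finrank_euclideanSpace_fin]; exact_mod_cast lt_add_one n)
  have hI : I ≠ ∞ := by
    have h1 : I = ∫⁻ z : Rn n, ENNReal.ofReal ((1 + ‖z‖) ^ (-(n + 1 : ℝ))) := by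
      rw [hIdef]; congr 1; funext z; rw [hgrpow z]
    rw [h1]
    exact hInt.lintegral_lt_top.ne
  set vB : ℝ≥0∞ := volume (ball (0 : Rn n) μ₀) with hvBdef
  have hvB0 : vB ≠ 0 := (measure_ball_pos volume 0 hμ₀).ne'
  have hvBtop : vB ≠ ∞ := measure_ball_lt_top.ne
  set K : ℝ≥0∞ := ENNReal.ofReal ((1 + μ₀) ^ (n + 1)) with hKdef
  have hKtop : K ≠ ∞ := ENNReal.ofReal_ne_top
  have htrans : ∀ x : Rn n, (∫⁻ t : Rn n, ENNReal.ofReal (g (x - t))) = I :=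
    fun x => (Measure.measurePreserving_sub_left volume x).lintegral_comp hgm
  have htrans' : ∀ j : ℕ, (∫⁻ x : Rn n, ENNReal.ofReal (g (x - y j))) = I :=
    fun j => lintegral_sub_right_eq_self (fun z => ENNReal.ofReal (g z)) (y j)
  set Sg : ℝ≥0∞ := K * I / vB with hSgdef
  have hSgtop : Sg ≠ ∞ :=
    (ENNReal.div_lt_top (ENNReal.mul_ne_top hKtop hI) hvB0).ne
  -- the key separation estimate
  have key : ∀ x : Rn n, (∑' j : ℕ, ENNReal.ofReal (g (x - y j))) ≤ Sg := by
    intro x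
    rw [hSgdef, ENNReal.le_div_iff_mul_le (Or.inl hvB0) (Or.inl hvBtop)]
    have hdisj : Pairwise (Function.onFun Disjoint fun j : ℕ => ball (y j) μ₀) := by
      intro j k hjk
      apply ball_disjoint_ball
      rw [dist_eq_norm]
      linarith [hsep j k hjk]
    have hstep : ∀ j : ℕ, ENNReal.ofReal (g (x - y j)) * vB ≤
        K * ∫⁻ t in ball (y j) μ₀, ENNReal.ofReal (g (x - t)) := by
      intro j
      have hball : volume (ball (y j) μ₀) = vB := by
        rw [hvBdef, Measure.addHaar_ball_center]
      have hpt : ∀ t ∈ ball (y j) μ₀,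
          ENNReal.ofReal (g (x - y j)) ≤ K * ENNReal.ofReal (g (x - t)) := by
        intro t ht
        have hd : ‖y j - t‖ ≤ μ₀ := by
          have h5 := mem_ball.mp ht
          rw [dist_eq_norm] at h5
          rw [norm_sub_rev]
          linarith
        have h2 : ‖x - t‖ ≤ ‖x - y j‖ + ‖y j - t‖ := by
          have : x - t = (x - y j) + (y j - t) := by abel
          rw [this]; exact norm_add_le _ _
        have h1 : 1 + ‖x - t‖ ≤ (1 + μ₀) * (1 + ‖x - y j‖) := by
          nlinarith [norm_nonneg (x - y j)]
        have h3 : (1 + ‖x - t‖) ^ (n+1) ≤ (1 + μ₀) ^ (n+1) * (1 + ‖x - y j‖) ^ (n+1) := by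
          rw [← mul_pow]
          exact pow_le_pow_left₀ (by positivity) h1 _
        have h4 : g (x - y j) ≤ (1 + μ₀) ^ (n+1) * g (x - t) := by
          simp only [hgdef]
          rw [inv_eq_one_div, inv_eq_one_div, mul_one_div,
            div_le_div_iff₀ (hbase _) (hbase _)]
          nlinarith [hbase (x - t), hbase (x - y j)]
        calc ENNReal.ofReal (g (x - y j))
            ≤ ENNReal.ofReal ((1 + μ₀) ^ (n+1) * g (x - t)) :=
              ENNReal.ofReal_le_ofReal h4
          _ = K * ENNReal.ofReal (g (x - t)) := by
              rw [ENNReal.ofReal_mul (by positivity)]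
      calc ENNReal.ofReal (g (x - y j)) * vB
          = ∫⁻ _ in ball (y j) μ₀, ENNReal.ofReal (g (x - y j)) := by
            rw [setLIntegral_const, hball]
        _ ≤ ∫⁻ t in ball (y j) μ₀, K * ENNReal.ofReal (g (x - t)) :=
            setLIntegral_mono
              ((hgm.comp (measurable_const.sub measurable_id)).const_mul K) hpt
        _ = K * ∫⁻ t in ball (y j) μ₀, ENNReal.ofReal (g (x - t)) :=
            lintegral_const_mul K (hgm.comp (measurable_const.sub measurable_id))
    calc (∑' j : ℕ, ENNReal.ofReal (g (x - y j))) * vB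
        = ∑' j : ℕ, ENNReal.ofReal (g (x - y j)) * vB := ENNReal.tsum_mul_right.symm
      _ ≤ ∑' j : ℕ, K * ∫⁻ t in ball (y j) μ₀, ENNReal.ofReal (g (x - t)) :=
          ENNReal.tsum_le_tsum hstep
      _ = K * ∑' j : ℕ, ∫⁻ t in ball (y j) μ₀, ENNReal.ofReal (g (x - t)) :=
          ENNReal.tsum_mul_left
      _ = K * ∫⁻ t in ⋃ j : ℕ, ball (y j) μ₀, ENNReal.ofReal (g (x - t)) := by
          rw [lintegral_iUnion (fun j => measurableSet_ball) hdisj]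
      _ ≤ K * ∫⁻ t, ENNReal.ofReal (g (x - t)) := by
          gcongr
          exact Measure.restrict_le_self
      _ = K * I := by rw [htrans x]
  -- abbreviations for the main estimate
  set AE : ℝ≥0∞ := ENNReal.ofReal A with hAEdef
  have hAEtop : AE ≠ ∞ := ENNReal.ofReal_ne_top
  set W : ℕ → Rn n → ℝ≥0∞ := fun j x => ENNReal.ofReal (g (x - y j)) with hWdef
  have hWm : ∀ j, Measurable (W j) :=
    fun j => hgm.comp (measurable_id.sub measurable_const)
  have hW0 : ∀ j x, W j x ≠ 0 :=
    fun j x => (ENNReal.ofReal_pos.2 (hgpos _)).ne'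
  have hWtop : ∀ j x, W j x ≠ ∞ := fun j x => ENNReal.ofReal_ne_top
  have hWI : ∀ j, (∫⁻ x, W j x) = I := htrans'
  have hWS : ∀ x, (∑' j : ℕ, W j x) ≤ Sg := key
  -- pointwise bound on the norm of the sum
  have hpt : ∀ (b : ℕ → ℂ) (x : Rn n),
      (‖∑' j : ℕ, b j * ((ψ (x - y j) : ℝ) : ℂ)‖₊ : ℝ≥0∞) ≤
        AE * ∑' j : ℕ, (‖b j‖₊ : ℝ≥0∞) * W j x := by
    intro b x
    refine le_trans (aux_enorm_tsum _) ?_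
    rw [← ENNReal.tsum_mul_left]
    refine ENNReal.tsum_le_tsum fun j => ?_
    have heq : (‖b j * ((ψ (x - y j):ℝ):ℂ)‖₊ : ℝ≥0∞) =
        (‖b j‖₊ : ℝ≥0∞) * ENNReal.ofReal (ψ (x - y j)) := by
      rw [nnnorm_mul, ENNReal.coe_mul, Complex.nnnorm_real,
        ← enorm_eq_nnnorm (ψ (x - y j)), Real.enorm_eq_ofReal (hψ0 _)]
    rw [heq]
    calc (‖b j‖₊ : ℝ≥0∞) * ENNReal.ofReal (ψ (x - y j))
        ≤ (‖b j‖₊ : ℝ≥0∞) * ENNReal.ofReal (A * g (x - y j)) := by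
          gcongr
          exact hψg _
      _ = AE * ((‖b j‖₊:ℝ≥0∞) * W j x) := by
          rw [ENNReal.ofReal_mul hA0.le]; ring
  -- reduce to an `ℝ≥0∞` constant
  suffices h : ∃ D : ℝ≥0∞, D ≠ ∞ ∧ ∀ b : ℕ → ℂ,
      eLpNorm (fun x : Rn n => ∑' j : ℕ, b j * ((ψ (x - y j) : ℝ) : ℂ)) r volume ≤
        D * lqNorm r (fun j => (‖b j‖₊ : ℝ≥0∞)) by
    obtain ⟨D, hDtop, hD⟩ := h
    refine ⟨D.toNNReal + 1, by positivity, fun b => (hD b).trans ?_⟩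
    gcongr
    have h9 : D ≤ (D.toNNReal : ℝ≥0∞) + 1 := by
      rw [ENNReal.coe_toNNReal hDtop]; exact le_self_add
    refine h9.trans ?_
    rw [ENNReal.coe_add, ENNReal.coe_one]
  rcases eq_or_ne r ∞ with hrtop | hrtop
  · -- case r = ∞
    subst hrtop
    refine ⟨AE * Sg, ENNReal.mul_ne_top hAEtop hSgtop, fun b => ?_⟩
    have hb : lqNorm ⊤ (fun j => (‖b j‖₊:ℝ≥0∞)) = ⨆ j, (‖b j‖₊:ℝ≥0∞) := by
      simp [lqNorm]
    rw [eLpNorm_exponent_top, hb]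
    refine essSup_le_of_ae_le _ (Filter.Eventually.of_forall fun x => ?_)
    refine (hpt b x).trans ?_
    rw [mul_assoc]
    refine mul_le_mul_right ?_ AE
    calc (∑' j : ℕ, (‖b j‖₊ : ℝ≥0∞) * W j x)
        ≤ ∑' j : ℕ, (⨆ k, (‖b k‖₊ : ℝ≥0∞)) * W j x := by
          gcongr with j
          exact le_iSup (fun k => (‖b k‖₊ : ℝ≥0∞)) j
      _ = (⨆ k, (‖b k‖₊ : ℝ≥0∞)) * ∑' j : ℕ, W j x := ENNReal.tsum_mul_left
      _ ≤ Sg * ⨆ j, (‖b j‖₊:ℝ≥0∞) := by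
          rw [mul_comm]; gcongr; exact hWS x
  rcases eq_or_ne r 1 with hr1 | hr1
  · -- case r = 1
    subst hr1
    refine ⟨AE * I, ENNReal.mul_ne_top hAEtop hI, fun b => ?_⟩
    have hlq : lqNorm 1 (fun j => (‖b j‖₊:ℝ≥0∞)) = ∑' j : ℕ, (‖b j‖₊:ℝ≥0∞) := by
      simp [lqNorm]
    rw [hlq, eLpNorm_one_eq_lintegral_enorm]
    calc (∫⁻ x, (‖∑' j : ℕ, b j * ((ψ (x - y j) : ℝ) : ℂ)‖₊ : ℝ≥0∞))
        ≤ ∫⁻ x, AE * ∑' j : ℕ, (‖b j‖₊ : ℝ≥0∞) * W j x := lintegral_mono (hpt b)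
      _ = AE * ∫⁻ x, ∑' j : ℕ, (‖b j‖₊ : ℝ≥0∞) * W j x :=
          lintegral_const_mul AE (Measurable.ennreal_tsum fun j => (hWm j).const_mul _)
      _ = AE * ∑' j : ℕ, ∫⁻ x, (‖b j‖₊ : ℝ≥0∞) * W j x := by
          rw [lintegral_tsum fun j => ((hWm j).const_mul _).aemeasurable]
      _ = AE * ∑' j : ℕ, (‖b j‖₊ : ℝ≥0∞) * I := by
          congr 1
          apply tsum_congr
          intro j
          rw [lintegral_const_mul _ (hWm j), hWI j]
      _ = AE * I * ∑' j : ℕ, (‖b j‖₊:ℝ≥0∞) := by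
          rw [ENNReal.tsum_mul_right]; ring
  · -- case 1 < r < ∞
    have hrlt : 1 < r := lt_of_le_of_ne hr (Ne.symm hr1)
    have hr0 : r ≠ 0 := (zero_lt_one.trans_le hr).ne'
    set p : ℝ := r.toReal with hpdef
    have hp1 : 1 < p := by
      have := ENNReal.toReal_strict_mono hrtop hrlt
      simpa using this
    have hp0 : 0 < p := lt_trans one_pos hp1
    set q : ℝ := Real.conjExponent p with hqdef
    have hpq : p.HolderConjugate q := Real.HolderConjugate.conjExponent hp1
    have hq0 : 0 < q := hpq.symm.pos
    -- Hölder for series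
    have holder : ∀ (a : ℕ → ℝ≥0∞) (x : Rn n), (∑' j : ℕ, a j * W j x) ≤
        (∑' j : ℕ, (a j)^p * W j x)^(1/p) * Sg^(1/q) := by
      intro a x
      have h1 : (∑' j : ℕ, a j * W j x) =
          ∫⁻ j, (fun j => a j * (W j x)^(1/p)) j * (fun j => (W j x)^(1/q)) j
            ∂Measure.count := by
        rw [lintegral_count]
        apply tsum_congr
        intro j
        simp only
        rw [mul_assoc, ← ENNReal.rpow_add _ _ (hW0 j x) (hWtop j x)]
        rw [one_div, one_div, hpq.inv_add_inv_eq_one, ENNReal.rpow_one]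
      rw [h1]
      refine le_trans (ENNReal.lintegral_mul_le_Lp_mul_Lq _ hpq
        (measurable_of_countable _).aemeasurable
        (measurable_of_countable _).aemeasurable) ?_
      rw [lintegral_count, lintegral_count]
      have h2 : (∑' j : ℕ, (a j * (W j x)^(1/p))^p) = ∑' j : ℕ, (a j)^p * W j x := by
        apply tsum_congr
        intro j
        rw [ENNReal.mul_rpow_of_nonneg _ _ hp0.le, ← ENNReal.rpow_mul,
          one_div_mul_cancel hp0.ne', ENNReal.rpow_one]
      have h3 : (∑' j : ℕ, ((W j x)^(1/q))^q) = ∑' j : ℕ, W j x := by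
        apply tsum_congr
        intro j
        rw [← ENNReal.rpow_mul, one_div_mul_cancel hq0.ne', ENNReal.rpow_one]
      rw [h2, h3]
      gcongr
      exact hWS x
    refine ⟨AE * Sg^(1/q) * I^(1/p),
      ENNReal.mul_ne_top (ENNReal.mul_ne_top hAEtop
        (ENNReal.rpow_ne_top_of_nonneg (by positivity) hSgtop))
        (ENNReal.rpow_ne_top_of_nonneg (by positivity) hI), fun b => ?_⟩
    set a : ℕ → ℝ≥0∞ := fun j => (‖b j‖₊ : ℝ≥0∞) with hadef
    have hFx : ∀ x : Rn n, (‖∑' j : ℕ, b j * ((ψ (x - y j) : ℝ) : ℂ)‖₊ : ℝ≥0∞) ≤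
        (AE * Sg^(1/q)) * (∑' j : ℕ, a j ^ p * W j x)^(1/p) := by
      intro x
      refine (hpt b x).trans ?_
      calc AE * ∑' j : ℕ, a j * W j x
          ≤ AE * ((∑' j : ℕ, a j ^ p * W j x)^(1/p) * Sg^(1/q)) := by
            gcongr
            exact holder a x
        _ = (AE * Sg^(1/q)) * (∑' j : ℕ, a j ^ p * W j x)^(1/p) := by ring
    have hlq : lqNorm r (fun j => (‖b j‖₊:ℝ≥0∞)) = (∑' j : ℕ, a j ^ p)^(1/p) := by
      simp only [lqNorm, if_neg hrtop, hadef, hpdef]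
    rw [hlq, eLpNorm_eq_lintegral_rpow_enorm_toReal hr0 hrtop]
    have hmeas : Measurable fun x => ∑' j : ℕ, a j ^ p * W j x :=
      Measurable.ennreal_tsum fun j => (hWm j).const_mul _
    have hi : (∫⁻ x, (‖∑' j : ℕ, b j * ((ψ (x - y j) : ℝ) : ℂ)‖₊ : ℝ≥0∞)^p) ≤
        (AE * Sg^(1/q))^p * ((∑' j : ℕ, a j ^ p) * I) := by
      calc (∫⁻ x, (‖∑' j : ℕ, b j * ((ψ (x - y j) : ℝ) : ℂ)‖₊ : ℝ≥0∞)^p)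
          ≤ ∫⁻ x, ((AE * Sg^(1/q)) * (∑' j : ℕ, a j ^ p * W j x)^(1/p))^p :=
            lintegral_mono fun x => ENNReal.rpow_le_rpow (hFx x) hp0.le
        _ = ∫⁻ x, (AE * Sg^(1/q))^p * (∑' j : ℕ, a j ^ p * W j x) := by
            apply lintegral_congr
            intro x
            rw [ENNReal.mul_rpow_of_nonneg _ _ hp0.le, ← ENNReal.rpow_mul,
              one_div_mul_cancel hp0.ne', ENNReal.rpow_one]
        _ = (AE * Sg^(1/q))^p * ∫⁻ x, ∑' j : ℕ, a j ^ p * W j x :=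
            lintegral_const_mul _ hmeas
        _ = (AE * Sg^(1/q))^p * ∑' j : ℕ, ∫⁻ x, a j ^ p * W j x := by
            rw [lintegral_tsum fun j => ((hWm j).const_mul _).aemeasurable]
        _ = (AE * Sg^(1/q))^p * ∑' j : ℕ, a j ^ p * I := by
            congr 1
            apply tsum_congr
            intro j
            rw [lintegral_const_mul _ (hWm j), hWI j]
        _ = (AE * Sg^(1/q))^p * ((∑' j : ℕ, a j ^ p) * I) := by
            rw [ENNReal.tsum_mul_right]
    calc (∫⁻ x, (‖∑' j : ℕ, b j * ((ψ (x - y j) : ℝ) : ℂ)‖₊ : ℝ≥0∞)^p)^(1/p)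
        ≤ ((AE * Sg^(1/q))^p * ((∑' j : ℕ, a j ^ p) * I))^(1/p) :=
          ENNReal.rpow_le_rpow hi (by positivity)
      _ = (AE * Sg^(1/q)) * ((∑' j : ℕ, a j ^ p)^(1/p) * I^(1/p)) := by
          rw [ENNReal.mul_rpow_of_nonneg _ _ (by positivity : (0:ℝ) ≤ 1/p),
            ENNReal.mul_rpow_of_nonneg _ _ (by positivity : (0:ℝ) ≤ 1/p),
            ← ENNReal.rpow_mul, mul_one_div_cancel hp0.ne', ENNReal.rpow_one]
      _ = AE * Sg^(1/q) * I^(1/p) * (∑' j : ℕ, a j ^ p)^(1/p) := by ring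

end
end

section
/- There exists a constant C₁ = C₁(φ, χ, μ₀) > 0 such that for every integer j ≥ 1 and every x ∈ ℝⁿ with |x| < μ₀/2: |φ_j * φ_j * (χ e_j)(x)| ≥ 1 − C₁ 2^{−j}. -/
open MeasureTheory Metric Filter Complex SchwartzMap
open scoped FourierTransform ENNReal NNReal Real

noncomputable section

open scoped RealInnerProductSpace

lemma aux_fourier_eval (f : Rn n → ℂ) (c : ℝ) (y₀ : Rn n) :
    ∫ s : Rn n, f s *
      Complex.exp (-(2 * (Real.pi : ℂ) * Complex.I) * ((c * (inner ℝ y₀ s : ℝ) : ℝ) : ℂ))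
      = 𝓕 f (c • y₀) := by
  rw [Real.fourier_eq']
  congr 1
  funext v
  rw [smul_eq_mul, mul_comm (f v)]
  congr 1
  have h1 : ⟪v, c • y₀⟫ = c * ⟪y₀, v⟫ := by
    rw [real_inner_smul_right, real_inner_comm]
  rw [h1]
  push_cast
  ring

lemma aux_norm_expChar (y₀ : Rn n) (c : ℝ) (x : Rn n) : ‖expChar y₀ c x‖ = 1 := by
  unfold expChar
  have h : 2 * (Real.pi : ℂ) * Complex.I * ((c * (inner ℝ y₀ x : ℝ) : ℝ) : ℂ)
      = ((2 * Real.pi * (c * (inner ℝ y₀ x : ℝ)) : ℝ) : ℂ) * Complex.I := by push_cast; ring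
  rw [h]
  rw [Complex.norm_exp_ofReal_mul_I]

lemma aux_expChar_sub (y₀ : Rn n) (c : ℝ) (u s : Rn n) :
    expChar y₀ c (u - s) = expChar y₀ c u *
      Complex.exp (-(2 * (Real.pi : ℂ) * Complex.I) * ((c * (inner ℝ y₀ s : ℝ) : ℝ) : ℂ)) := by
  unfold expChar
  rw [← Complex.exp_add]
  congr 1
  have h : ⟪y₀, u - s⟫ = ⟪y₀, u⟫ - ⟪y₀, s⟫ := inner_sub_right y₀ u s
  rw [h]
  push_cast
  ring

/-- main-term identity: convolving with the character reproduces it, given `𝓕 f (c•y₀) = 1`. -/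
lemma aux_conv_expChar (f : Rn n → ℂ) (y₀ : Rn n) (c : ℝ)
    (hval : 𝓕 f (c • y₀) = 1) (u : Rn n) :
    ∫ s, f s * expChar y₀ c (u - s) = expChar y₀ c u := by
  have h : (fun s => f s * expChar y₀ c (u - s))
      = fun s => expChar y₀ c u * (f s *
        Complex.exp (-(2 * (Real.pi : ℂ) * Complex.I) * ((c * (inner ℝ y₀ s : ℝ) : ℝ) : ℂ))) := by
    funext s
    rw [aux_expChar_sub]
    ring
  rw [h, MeasureTheory.integral_const_mul, aux_fourier_eval, hval, mul_one]

/-- The value of `𝓕 (φ j)` at `2^j y₀` is 1. -/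
lemma aux_fourier_phi_one {φ : ℕ → SchwartzFn n} (hφ : IsLittlewoodPaley φ)
    {y₀ : Rn n} (hy₀ : ‖y₀‖ = 1) {j : ℕ} (hj : 1 ≤ j) :
    𝓕 ⇑(φ j) (((2:ℝ) ^ (j:ℕ)) • y₀) = 1 := by
  obtain ⟨ε, hε, hone⟩ := hφ.one_near_ball
  rw [hφ.spec j hj]
  have e1 : (2:ℝ) ^ (-(j:ℝ)) • (((2:ℝ) ^ (j:ℕ)) • y₀) = y₀ := by
    rw [smul_smul]
    have : (2:ℝ) ^ (-(j:ℝ)) * (2:ℝ) ^ (j:ℕ) = 1 := by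
      rw [Real.rpow_neg (by norm_num), Real.rpow_natCast]
      field_simp
    rw [this, one_smul]
  have e2 : (2:ℝ) ^ (1-(j:ℝ)) • (((2:ℝ) ^ (j:ℕ)) • y₀) = (2:ℝ) • y₀ := by
    rw [smul_smul]
    congr 1
    rw [Real.rpow_sub (by norm_num), Real.rpow_one, Real.rpow_natCast]
    field_simp
  rw [e1, e2, hone y₀ (by rw [hy₀]; linarith),
    hφ.supp_zero ((2:ℝ) • y₀) (by rw [norm_smul, hy₀]; norm_num)]
  ring

lemma aux_fourier_comp_smul (f : Rn n → ℂ) (c : ℝ) (hc : 0 < c) (ξ : Rn n) :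
    𝓕 (fun x : Rn n => ((c ^ n : ℝ) : ℂ) * f (c • x)) ξ = 𝓕 f (c⁻¹ • ξ) := by
  rw [Real.fourier_eq, Real.fourier_eq]
  have key : (fun v : Rn n => 𝐞 (-⟪v, ξ⟫) • (((c ^ n : ℝ) : ℂ) * f (c • v)))
      = fun v : Rn n => ((c ^ n : ℝ) : ℂ) *
        ((fun u : Rn n => 𝐞 (-⟪u, c⁻¹ • ξ⟫) • f u) (c • v)) := by
    funext v
    have h : ⟪c • v, c⁻¹ • ξ⟫ = ⟪v, ξ⟫ := by
      rw [real_inner_smul_left, real_inner_smul_right]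
      field_simp
    simp only [h, Circle.smul_def, smul_eq_mul]
    ring
  rw [key, MeasureTheory.integral_const_mul]
  have hint := MeasureTheory.Measure.integral_comp_smul (volume : Measure (Rn n))
    (fun u : Rn n => 𝐞 (-⟪u, c⁻¹ • ξ⟫) • f u) c
  rw [hint, finrank_euclideanSpace_fin]
  have h2 : |((c ^ n)⁻¹ : ℝ)| = (c ^ n)⁻¹ := abs_of_pos (by positivity)
  rw [h2, Complex.real_smul]
  push_cast
  have h3 : (c : ℂ) ^ n ≠ 0 := by
    norm_cast
    positivity
  field_simp

/-- Scaling identity: `φ (k+1) = 2^(kn) φ₁ (2^k ·)`. -/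
lemma aux_phi_scale {φ : ℕ → SchwartzFn n} (hφ : IsLittlewoodPaley φ) (k : ℕ) :
    ⇑(φ (k+1)) = fun x : Rn n =>
      (((((2:ℝ) ^ k) ^ n : ℝ)) : ℂ) * (φ 1) (((2:ℝ) ^ k : ℝ) • x) := by
  set c : ℝ := (2:ℝ) ^ k with hc_def
  have hc : 0 < c := by positivity
  set ψ : Rn n → ℂ := fun x => ((c ^ n : ℝ) : ℂ) * (φ 1) (c • x) with hψ_def
  have hFeq : 𝓕 ψ = 𝓕 ⇑(φ (k+1)) := by
    funext ξ
    rw [hψ_def]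
    rw [aux_fourier_comp_smul (⇑(φ 1)) c hc ξ]
    rw [hφ.spec 1 le_rfl, hφ.spec (k+1) (Nat.le_add_left 1 k)]
    have s1 : (2:ℝ) ^ (-((1:ℕ):ℝ)) • (c⁻¹ • ξ) = (2:ℝ) ^ (-(((k+1:ℕ)):ℝ)) • ξ := by
      rw [smul_smul]
      congr 1
      rw [Real.rpow_neg (by norm_num), Real.rpow_neg (by norm_num),
        Real.rpow_natCast, Real.rpow_natCast, hc_def, ← mul_inv]
      ring
    have s2 : (2:ℝ) ^ (1-((1:ℕ):ℝ)) • (c⁻¹ • ξ) = (2:ℝ) ^ (1-(((k+1:ℕ)):ℝ)) • ξ := by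
      rw [smul_smul]
      congr 1
      have h1 : (1:ℝ) - ((1:ℕ):ℝ) = 0 := by norm_num
      have h2 : (1:ℝ) - (((k+1:ℕ)):ℝ) = -(k:ℝ) := by push_cast; ring
      rw [h1, h2, Real.rpow_zero, one_mul, Real.rpow_neg (by norm_num), Real.rpow_natCast]
    rw [s1, s2]
  have hψcont : Continuous ψ := by
    exact continuous_const.mul ((φ 1).continuous.comp (continuous_const_smul c))
  have hψint : Integrable ψ volume := ((φ 1).integrable.comp_smul hc.ne').const_mul _
  have hFint : Integrable (𝓕 ⇑(φ (k+1))) volume := by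
    have := (SchwartzMap.fourierTransformCLM ℂ (φ (k+1))).integrable (μ := volume)
    exact this
  have h1 : 𝓕⁻ (𝓕 ⇑(φ (k+1))) = ⇑(φ (k+1)) :=
    (φ (k+1)).continuous.fourierInv_fourier_eq (φ (k+1)).integrable hFint
  have h2 : 𝓕⁻ (𝓕 ψ) = ψ := hψcont.fourierInv_fourier_eq hψint (hFeq ▸ hFint)
  calc ⇑(φ (k+1)) = 𝓕⁻ (𝓕 ⇑(φ (k+1))) := h1.symm
    _ = 𝓕⁻ (𝓕 ψ) := by rw [hFeq]
    _ = ψ := h2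

lemma aux_int_norm_scale (f : Rn n → ℂ) (c : ℝ) (hc : 0 < c) :
    ∫ s : Rn n, ‖((c ^ n : ℝ) : ℂ) * f (c • s)‖ = ∫ s : Rn n, ‖f s‖ := by
  have h1 : (fun s : Rn n => ‖((c ^ n : ℝ) : ℂ) * f (c • s)‖)
      = fun s : Rn n => (fun u : Rn n => c ^ n * ‖f u‖) (c • s) := by
    funext s
    rw [norm_mul, Complex.norm_real, Real.norm_eq_abs, abs_of_pos (by positivity)]
  rw [h1, MeasureTheory.Measure.integral_comp_smul volume (fun u : Rn n => c ^ n * ‖f u‖) c,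
    finrank_euclideanSpace_fin, MeasureTheory.integral_const_mul, smul_eq_mul,
    abs_of_pos (by positivity : (0:ℝ) < (c ^ n)⁻¹)]
  have : (c:ℝ) ^ n ≠ 0 := by positivity
  field_simp

lemma aux_int_weight_scale (f : Rn n → ℂ) (c : ℝ) (hc : 0 < c) :
    ∫ s : Rn n, ‖s‖ * ‖((c ^ n : ℝ) : ℂ) * f (c • s)‖
      = c⁻¹ * ∫ s : Rn n, ‖s‖ * ‖f s‖ := by
  have h1 : (fun s : Rn n => ‖s‖ * ‖((c ^ n : ℝ) : ℂ) * f (c • s)‖)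
      = fun s : Rn n => (fun u : Rn n => c ^ n * (c⁻¹ * (‖u‖ * ‖f u‖))) (c • s) := by
    funext s
    show ‖s‖ * ‖((c ^ n : ℝ) : ℂ) * f (c • s)‖
      = c ^ n * (c⁻¹ * (‖c • s‖ * ‖f (c • s)‖))
    rw [norm_mul, Complex.norm_real, Real.norm_eq_abs, abs_of_pos (by positivity),
      norm_smul, Real.norm_eq_abs, abs_of_pos hc]
    field_simp
  rw [h1, MeasureTheory.Measure.integral_comp_smul volume
      (fun u : Rn n => c ^ n * (c⁻¹ * (‖u‖ * ‖f u‖))) c,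
    finrank_euclideanSpace_fin, smul_eq_mul,
    abs_of_pos (by positivity : (0:ℝ) < (c ^ n)⁻¹)]
  rw [MeasureTheory.integral_const_mul, MeasureTheory.integral_const_mul]
  have : (c:ℝ) ^ n ≠ 0 := by positivity
  field_simp

lemma aux_expChar_continuous (y₀ : Rn n) (c : ℝ) : Continuous (expChar y₀ c) := by
  unfold expChar
  exact Complex.continuous_exp.comp (continuous_const.mul (Complex.continuous_ofReal.comp
    (continuous_const.mul (continuous_const.inner continuous_id))))

set_option maxHeartbeats 2000000 in
/-- There is `C₁ > 0` with
`|φ_j * φ_j * (χ e_j)(x)| ≥ 1 − C₁ 2^(−j)` for all `j ≥ 1` and `|x| < μ₀/2`. -/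
theorem statement15 {n : ℕ} (hn : 1 ≤ n) (φ : ℕ → SchwartzFn n) (hφ : IsLittlewoodPaley φ)
    (μ₀ : ℝ) (hμ₀ : 0 < μ₀) (y₀ : Rn n) (hy₀ : ‖y₀‖ = 1)
    (χ : Rn n → ℝ) (hχsm : ContDiff ℝ (⊤ : ℕ∞) χ)
    (hχsupp : ∀ x : Rn n, 2 * μ₀ ≤ ‖x‖ → χ x = 0)
    (hχone : ∀ x : Rn n, ‖x‖ < μ₀ → χ x = 1)
    (hχ01 : ∀ x : Rn n, 0 ≤ χ x ∧ χ x ≤ 1) :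
    ∃ C₁ > (0:ℝ), ∀ j : ℕ, 1 ≤ j → ∀ x : Rn n, ‖x‖ < μ₀ / 2 →
      1 - C₁ * (2:ℝ) ^ (-(j:ℝ)) ≤
        ‖fconv (⇑(φ j)) (fconv (⇑(φ j)) (chiE χ y₀ j)) x‖ := by
  classical
  obtain ⟨A, hA_def⟩ : ∃ A : ℝ, A = ∫ s : Rn n, ‖(φ 1) s‖ := ⟨_, rfl⟩
  obtain ⟨W, hW_def⟩ : ∃ W : ℝ, W = ∫ s : Rn n, ‖s‖ * ‖(φ 1) s‖ := ⟨_, rfl⟩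
  have hA0 : 0 ≤ A := hA_def ▸ integral_nonneg fun s => norm_nonneg _
  have hW0 : 0 ≤ W := hW_def ▸ integral_nonneg fun s => mul_nonneg (norm_nonneg _) (norm_nonneg _)
  have hμ4 : (0:ℝ) < 4 / μ₀ := div_pos (by norm_num) hμ₀
  have h16 : (0:ℝ) < 16 / μ₀ := div_pos (by norm_num) hμ₀
  refine ⟨16 / μ₀ * A * W + 1, by nlinarith [mul_nonneg (mul_nonneg h16.le hA0) hW0], ?_⟩
  intro j hj x hx
  obtain ⟨k, rfl⟩ : ∃ k, j = k + 1 := ⟨j - 1, by omega⟩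
  set c2 : ℝ := (2:ℝ) ^ ((k+1 : ℕ)) with hc2_def
  set fj : Rn n → ℂ := ⇑(φ (k+1)) with hfj_def
  set E : Rn n → ℂ := expChar y₀ c2 with hE_def
  set Cf : Rn n → ℂ := chiE χ y₀ (k+1) with hCf_def
  -- basic facts
  have hfour1 : 𝓕 fj (c2 • y₀) = 1 := aux_fourier_phi_one hφ hy₀ (Nat.le_add_left 1 k)
  have hmain : ∀ u : Rn n, ∫ s, fj s * E (u - s) = E u :=
    aux_conv_expChar fj y₀ c2 hfour1
  have hEcont : Continuous E := aux_expChar_continuous y₀ c2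
  have hEnorm : ∀ v : Rn n, ‖E v‖ = 1 := aux_norm_expChar y₀ c2
  have hCcont : Continuous Cf := by
    rw [hCf_def]
    unfold chiE
    exact (Complex.continuous_ofReal.comp hχsm.continuous).mul
      (aux_expChar_continuous y₀ _)
  have hCbd : ∀ v : Rn n, ‖Cf v‖ ≤ 1 := by
    intro v
    rw [hCf_def]
    unfold chiE
    rw [norm_mul]
    have h1 : ‖((χ v : ℝ) : ℂ)‖ ≤ 1 := by
      rw [Complex.norm_real, Real.norm_eq_abs, abs_le]
      exact ⟨by linarith [(hχ01 v).1], (hχ01 v).2⟩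
    have h2 := aux_norm_expChar y₀ ((2:ℝ) ^ ((k+1 : ℕ))) v
    rw [h2]
    simpa using h1
  -- integrability
  have hfj_int : Integrable fj volume := (φ (k+1)).integrable
  have hfj_norm_int : Integrable (fun s : Rn n => ‖fj s‖) volume := hfj_int.norm
  have hfj_w_int : Integrable (fun s : Rn n => ‖s‖ * ‖fj s‖) volume := by
    simpa using (φ (k+1)).integrable_pow_mul volume 1
  -- scaling consequences
  have hscale := aux_phi_scale hφ k
  have hc2k : (0:ℝ) < (2:ℝ) ^ k := by positivity
  have hAj : ∫ s : Rn n, ‖fj s‖ = A := by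
    rw [hfj_def, hscale, hA_def]
    exact aux_int_norm_scale (⇑(φ 1)) ((2:ℝ) ^ k) hc2k
  have hWj : ∫ s : Rn n, ‖s‖ * ‖fj s‖ = ((2:ℝ) ^ k)⁻¹ * W := by
    rw [hfj_def, hscale, hW_def]
    exact aux_int_weight_scale (⇑(φ 1)) ((2:ℝ) ^ k) hc2k
  -- the inner convolution
  set g : Rn n → ℂ := fconv fj Cf with hg_def
  have hg_u : ∀ u : Rn n, g u = ∫ s, fj s * Cf (u - s) := fun u => rfl
  have hint_C : ∀ u : Rn n, Integrable (fun s => fj s * Cf (u - s)) volume := by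
    intro u
    have hm : AEStronglyMeasurable (fun s : Rn n => Cf (u - s)) volume :=
      (hCcont.comp (continuous_const.sub continuous_id)).aestronglyMeasurable
    have := hfj_int.bdd_mul hm (c := 1) (Eventually.of_forall fun s => hCbd (u - s))
    simpa [mul_comm] using this
  have hint_E : ∀ u : Rn n, Integrable (fun s => fj s * E (u - s)) volume := by
    intro u
    have hm : AEStronglyMeasurable (fun s : Rn n => E (u - s)) volume :=
      (hEcont.comp (continuous_const.sub continuous_id)).aestronglyMeasurable
    have := hfj_int.bdd_mul hm (c := 1) (Eventually.of_forall fun s => le_of_eq (hEnorm (u - s)))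
    simpa [mul_comm] using this
  have hg_cont : Continuous g := by
    have hg_eq : g = MeasureTheory.convolution fj Cf (ContinuousLinearMap.mul ℝ ℂ) volume := by
      funext u
      rw [hg_u u]
      simp [MeasureTheory.convolution, ContinuousLinearMap.mul_apply']
    rw [hg_eq]
    refine BddAbove.continuous_convolution_right_of_integrable _ ?_ hfj_int hCcont
    refine ⟨1, ?_⟩
    rintro r ⟨v, rfl⟩
    exact hCbd v
  have hg_bd : ∀ u : Rn n, ‖g u‖ ≤ A := by
    intro u
    rw [hg_u u]
    refine (norm_integral_le_integral_norm _).trans ?_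
    rw [← hAj]
    refine integral_mono_of_nonneg (Eventually.of_forall fun s => norm_nonneg _)
      hfj_norm_int (Eventually.of_forall fun s => ?_)
    simp only [norm_mul]
    have := hCbd (u - s)
    nlinarith [norm_nonneg (fj s)]
  -- difference identity
  have hdiff : ∀ u : Rn n, g u - E u = ∫ s, fj s * (Cf (u - s) - E (u - s)) := by
    intro u
    rw [hg_u u, ← hmain u, ← integral_sub (hint_C u) (hint_E u)]
    congr 1
    funext s
    ring
  -- pointwise bounds on Cf - E
  have hCE : ∀ v : Rn n, ‖Cf v - E v‖ = |χ v - 1| := by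
    intro v
    have h1 : Cf v - E v = (((χ v - 1 : ℝ)) : ℂ) * E v := by
      rw [hCf_def, hE_def]
      unfold chiE
      rw [hc2_def]
      push_cast
      ring
    rw [h1, norm_mul, hEnorm, mul_one, Complex.norm_real, Real.norm_eq_abs]
  have hD1 : ∀ v : Rn n, ‖Cf v - E v‖ ≤ 1 := by
    intro v
    rw [hCE v, abs_le]
    exact ⟨by linarith [(hχ01 v).1], by linarith [(hχ01 v).2]⟩
  have hD0 : ∀ v : Rn n, ‖v‖ < μ₀ → ‖Cf v - E v‖ = 0 := by
    intro v hv
    rw [hCE v, hχone v hv]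
    simp
  -- near bound
  have hbound_near : ∀ u : Rn n, ‖u‖ ≤ 3 * μ₀ / 4 →
      ‖g u - E u‖ ≤ 4 / μ₀ * (((2:ℝ) ^ k)⁻¹ * W) := by
    intro u hu
    rw [hdiff u]
    refine (norm_integral_le_integral_norm _).trans ?_
    have hle : ∫ s : Rn n, ‖fj s * (Cf (u - s) - E (u - s))‖
        ≤ ∫ s : Rn n, 4 / μ₀ * (‖s‖ * ‖fj s‖) := by
      refine integral_mono_of_nonneg (Eventually.of_forall fun s => norm_nonneg _)
        (hfj_w_int.const_mul _) (Eventually.of_forall fun s => ?_)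
      simp only [norm_mul]
      by_cases hv : ‖u - s‖ < μ₀
      · rw [hD0 _ hv, mul_zero]
        exact mul_nonneg hμ4.le (mul_nonneg (norm_nonneg _) (norm_nonneg _))
      · push_neg at hv
        have h1 : ‖u - s‖ ≤ ‖u‖ + ‖s‖ := norm_sub_le u s
        have hs : μ₀ / 4 ≤ ‖s‖ := by linarith
        have h2 := hD1 (u - s)
        have h3 : (0:ℝ) ≤ ‖fj s‖ := norm_nonneg _
        have key : ‖fj s‖ * ‖Cf (u - s) - E (u - s)‖ ≤ ‖fj s‖ := by nlinarith
        have key2 : ‖fj s‖ ≤ 4 / μ₀ * (‖s‖ * ‖fj s‖) := by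
          rw [div_mul_eq_mul_div, le_div_iff₀ hμ₀]
          nlinarith
        linarith
    refine hle.trans ?_
    rw [MeasureTheory.integral_const_mul, hWj]
  -- global bound
  have hbound_far : ∀ u : Rn n, ‖g u - E u‖ ≤ A := by
    intro u
    rw [hdiff u]
    refine (norm_integral_le_integral_norm _).trans ?_
    rw [← hAj]
    refine integral_mono_of_nonneg (Eventually.of_forall fun s => norm_nonneg _)
      hfj_norm_int (Eventually.of_forall fun s => ?_)
    simp only [norm_mul]
    have := hD1 (u - s)
    nlinarith [norm_nonneg (fj s)]
  -- outer convolution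
  have hint_g : Integrable (fun t => fj t * g (x - t)) volume := by
    have hm : AEStronglyMeasurable (fun t : Rn n => g (x - t)) volume :=
      (hg_cont.comp (continuous_const.sub continuous_id)).aestronglyMeasurable
    have := hfj_int.bdd_mul hm (c := A) (Eventually.of_forall fun t => hg_bd (x - t))
    simpa [mul_comm] using this
  have houter : fconv fj g x - E x = ∫ t, fj t * (g (x - t) - E (x - t)) := by
    have h0 : fconv fj g x = ∫ t, fj t * g (x - t) := rfl
    rw [h0, ← hmain x, ← integral_sub hint_g (hint_E x)]
    congr 1
    funext t
    ring
  have herr : ‖fconv fj g x - E x‖ ≤ 8 / μ₀ * A * (((2:ℝ) ^ k)⁻¹ * W) := by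
    rw [houter]
    refine (norm_integral_le_integral_norm _).trans ?_
    have hpt : ∀ t : Rn n, ‖fj t * (g (x - t) - E (x - t))‖
        ≤ 4 / μ₀ * (((2:ℝ) ^ k)⁻¹ * W) * ‖fj t‖ + 4 / μ₀ * A * (‖t‖ * ‖fj t‖) := by
      intro t
      rw [norm_mul]
      by_cases ht : ‖t‖ < μ₀ / 4
      · have hxt : ‖x - t‖ ≤ 3 * μ₀ / 4 := by
          have := norm_sub_le x t
          linarith
        have h1 := hbound_near (x - t) hxt
        have h2 : (0:ℝ) ≤ 4 / μ₀ * A * (‖t‖ * ‖fj t‖) :=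
          mul_nonneg (mul_nonneg hμ4.le hA0) (mul_nonneg (norm_nonneg _) (norm_nonneg _))
        nlinarith [norm_nonneg (fj t)]
      · push_neg at ht
        have h1 := hbound_far (x - t)
        have h2 : (0:ℝ) ≤ ‖fj t‖ := norm_nonneg _
        have h3 : ‖fj t‖ * ‖g (x - t) - E (x - t)‖ ≤ ‖fj t‖ * A :=
          mul_le_mul_of_nonneg_left h1 h2
        have h4 : ‖fj t‖ * A ≤ 4 / μ₀ * A * (‖t‖ * ‖fj t‖) := by
          rw [div_mul_eq_mul_div, div_mul_eq_mul_div, le_div_iff₀ hμ₀]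
          nlinarith [mul_le_mul_of_nonneg_left (by linarith : μ₀ ≤ 4 * ‖t‖)
            (mul_nonneg hA0 h2)]
        have h5 : (0:ℝ) ≤ 4 / μ₀ * (((2:ℝ) ^ k)⁻¹ * W) * ‖fj t‖ :=
          mul_nonneg (mul_nonneg hμ4.le (mul_nonneg (by positivity) hW0)) (norm_nonneg _)
        linarith
    have hint_rhs : Integrable (fun t : Rn n =>
        4 / μ₀ * (((2:ℝ) ^ k)⁻¹ * W) * ‖fj t‖ + 4 / μ₀ * A * (‖t‖ * ‖fj t‖)) volume :=
      (hfj_norm_int.const_mul _).add (hfj_w_int.const_mul _)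
    refine (integral_mono_of_nonneg (Eventually.of_forall fun t => norm_nonneg _)
      hint_rhs (Eventually.of_forall hpt)).trans ?_
    rw [integral_add (hfj_norm_int.const_mul _) (hfj_w_int.const_mul _),
      MeasureTheory.integral_const_mul, MeasureTheory.integral_const_mul, hAj, hWj]
    apply le_of_eq
    ring
  -- conclude
  have hE1 : ‖E x‖ = 1 := hEnorm x
  have htri : ‖E x‖ - ‖fconv fj g x - E x‖ ≤ ‖fconv fj g x‖ := by
    have := norm_sub_norm_le (E x) (fconv fj g x)
    have h2 : ‖E x - fconv fj g x‖ = ‖fconv fj g x - E x‖ := norm_sub_rev _ _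
    linarith
  have hpow : (2:ℝ) ^ (-(((k+1:ℕ)):ℝ)) = ((2:ℝ) ^ ((k+1:ℕ)))⁻¹ := by
    rw [Real.rpow_neg (by norm_num), Real.rpow_natCast]
  have hpos : (0:ℝ) < ((2:ℝ) ^ ((k+1:ℕ)))⁻¹ := by positivity
  have hfinal : 8 / μ₀ * A * (((2:ℝ) ^ k)⁻¹ * W)
      ≤ (16 / μ₀ * A * W + 1) * (2:ℝ) ^ (-(((k+1:ℕ)):ℝ)) := by
    rw [hpow]
    have hk1 : ((2:ℝ) ^ k)⁻¹ = 2 * ((2:ℝ) ^ (k+1))⁻¹ := by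
      rw [pow_succ]
      field_simp
    rw [hk1]
    have h1 : 8 / μ₀ * A * (2 * ((2:ℝ) ^ (k+1))⁻¹ * W)
        = 16 / μ₀ * A * W * ((2:ℝ) ^ (k+1))⁻¹ := by ring
    rw [h1]
    nlinarith [mul_nonneg (mul_nonneg h16.le hA0) hW0]
  calc 1 - (16 / μ₀ * A * W + 1) * (2:ℝ) ^ (-(((k+1:ℕ)):ℝ))
      ≤ 1 - 8 / μ₀ * A * (((2:ℝ) ^ k)⁻¹ * W) := by linarith
    _ ≤ ‖E x‖ - ‖fconv fj g x - E x‖ := by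
        rw [hE1]
        linarith [herr]
    _ ≤ ‖fconv fj g x‖ := htri


end
end
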